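/- arXiv:1905.11390 — 4 statements merged into one kernel-verified Lean document; each statement's English description precedes it below -/
import Mathlib

section
/- Let q be a prime power, n ≥ 1, and let f : F_{q^n} → F_{q^n} be an F_q-linear map. Then the condition 'for all nonzero x, y ∈ F_{q^n}, f(x)·y = f(y)·x implies y/x ∈ F_q' holds if and only if for every a ∈ F_{q^n} and every nonzero b ∈ F_{q^n}, the set {x ∈ F_{q^n} : a·x + b·f(x) = 0} has at most q elements. -/
/-- For an `F_q`-linear map `f` on `F_{q^n}`, the scatteredness condition
`f(x)·y = f(y)·x → y/x ∈ F_q` (for nonzero `x, y`) holds iff for every `a` and every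
nonzero `b` the set `{x : a·x + b·f(x) = 0}` has at most `q` elements.
Here `F_q` is identified with `{c : c^q = c}` inside `F_{q^n}`. -/
theorem stmt_1 (q n : ℕ) (hq : IsPrimePow q) (hn : 1 ≤ n)
    (F : Type) [Field F] [Fintype F] (hcard : Fintype.card F = q ^ n)
    (f : F → F) (hadd : ∀ x y : F, f (x + y) = f x + f y)
    (hlin : ∀ c x : F, c ^ q = c → f (c * x) = c * f x) :
    (∀ x y : F, x ≠ 0 → y ≠ 0 → f x * y = f y * x → (y / x) ^ q = y / x) ↔
    (∀ a b : F, b ≠ 0 → ({x : F | a * x + b * f x = 0}).ncard ≤ q) := by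
  classical
  have hq2 : 2 ≤ q := hq.two_le
  have hqn2 : 2 ≤ q ^ n := le_trans hq2 (Nat.le_self_pow (by omega) q)
  -- Count the fixed field: {c : F | c ^ q = c} has exactly q elements.
  have hdvd : q - 1 ∣ q ^ n - 1 := by
    simpa using Nat.sub_dvd_pow_sub_pow q 1 n
  obtain ⟨g, hg⟩ := IsCyclic.exists_ofOrder_eq_natCard (α := Fˣ)
  have hg' : orderOf g = q ^ n - 1 := by
    rw [hg, Nat.card_eq_fintype_card, Fintype.card_units, hcard]
  have hord : orderOf (g ^ ((q ^ n - 1) / (q - 1))) = q - 1 := by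
    rw [← hg']
    exact orderOf_pow_orderOf_div (by rw [hg']; omega) (hg' ▸ hdvd)
  have hprim : IsPrimitiveRoot ((↑(g ^ ((q ^ n - 1) / (q - 1))) : F)) (q - 1) := by
    have h := IsPrimitiveRoot.orderOf ((↑(g ^ ((q ^ n - 1) / (q - 1))) : F))
    rwa [orderOf_units, hord] at h
  have hnodup := hprim.nthRoots_nodup (a := (1 : F)) one_ne_zero
  have hcardroots : (Polynomial.nthRoots (q - 1) (1 : F)).toFinset.card = q - 1 := by
    rw [Multiset.toFinset_card_of_nodup hnodup, hprim.card_nthRoots_one]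
  have hsetEq : {c : F | c ^ q = c} =
      insert (0 : F) (↑(Polynomial.nthRoots (q - 1) (1 : F)).toFinset : Set F) := by
    ext c
    simp only [Set.mem_setOf_eq, Set.mem_insert_iff, Finset.coe_sort_coe,
      Finset.mem_coe, Multiset.mem_toFinset,
      Polynomial.mem_nthRoots (show 0 < q - 1 by omega)]
    constructor
    · intro h
      by_cases hc : c = 0
      · exact Or.inl hc
      · refine Or.inr ?_
        have h1 : c ^ (q - 1) * c = 1 * c := by
          rw [← pow_succ, Nat.sub_add_cancel (by omega), one_mul]; exact h
        exact mul_right_cancel₀ hc h1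
    · rintro (rfl | h)
      · exact zero_pow (by omega)
      · have : c ^ q = c ^ (q - 1) * c := by
          rw [← pow_succ, Nat.sub_add_cancel (by omega)]
        rw [this, h, one_mul]
  have h0notin : (0 : F) ∉ (↑(Polynomial.nthRoots (q - 1) (1 : F)).toFinset : Set F) := by
    simp only [Finset.coe_sort_coe, Finset.mem_coe, Multiset.mem_toFinset,
      Polynomial.mem_nthRoots (show 0 < q - 1 by omega)]
    rw [zero_pow (by omega)]
    exact zero_ne_one
  have hK : ({c : F | c ^ q = c}).ncard = q := by
    rw [hsetEq, Set.ncard_insert_of_notMem h0notin (Set.toFinite _),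
      Set.ncard_coe_finset, hcardroots]
    omega
  constructor
  · -- scattered → kernels small
    intro hL a b hb
    by_cases hS : ∀ z ∈ {x : F | a * x + b * f x = 0}, z = 0
    · have hsub : {x : F | a * x + b * f x = 0} ⊆ {0} := fun z hz => hS z hz
      calc ({x : F | a * x + b * f x = 0}).ncard ≤ ({0} : Set F).ncard :=
            Set.ncard_le_ncard hsub (Set.finite_singleton 0)
        _ = 1 := Set.ncard_singleton 0
        _ ≤ q := by omega
    · push_neg at hS
      obtain ⟨x0, hx0S, hx0⟩ := hS
      have hsub : {x : F | a * x + b * f x = 0} ⊆ (fun c => c * x0) '' {c : F | c ^ q = c} := by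
        intro y hy
        by_cases hy0 : y = 0
        · exact ⟨0, zero_pow (by omega), by simp [hy0]⟩
        · have h1 : a * x0 + b * f x0 = 0 := hx0S
          have h2 : a * y + b * f y = 0 := hy
          have key : f x0 * y = f y * x0 := by
            have h3 : b * (f x0 * y) = b * (f y * x0) := by
              linear_combination y * h1 - x0 * h2
            exact mul_left_cancel₀ hb h3
          exact ⟨y / x0, hL x0 y hx0 hy0 key, div_mul_cancel₀ y hx0⟩
      calc ({x : F | a * x + b * f x = 0}).ncard
          ≤ ((fun c => c * x0) '' {c : F | c ^ q = c}).ncard :=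
            Set.ncard_le_ncard hsub (Set.toFinite _)
        _ ≤ ({c : F | c ^ q = c}).ncard := Set.ncard_image_le (Set.toFinite _)
        _ = q := hK
  · -- kernels small → scattered
    intro hR x y hx hy hxy
    have hS := hR (-(f x)) x hx
    have hyS : y ∈ {z : F | -(f x) * z + x * f z = 0} := by
      simp only [Set.mem_setOf_eq]
      linear_combination -hxy
    have himg : (fun c => c * x) '' {c : F | c ^ q = c} ⊆
        {z : F | -(f x) * z + x * f z = 0} := by
      rintro _ ⟨c, hc, rfl⟩
      simp only [Set.mem_setOf_eq]
      rw [hlin c x hc]; ring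
    have hcardimg : ((fun c => c * x) '' {c : F | c ^ q = c}).ncard = q := by
      rw [Set.ncard_image_of_injective _ (fun a b h => mul_right_cancel₀ hx h)]
      exact hK
    have hEq : (fun c => c * x) '' {c : F | c ^ q = c} =
        {z : F | -(f x) * z + x * f z = 0} :=
      Set.eq_of_subset_of_ncard_le himg (by rw [hcardimg]; exact hS) (Set.toFinite _)
    rw [← hEq] at hyS
    obtain ⟨c, hc, hcx⟩ := hyS
    have hyx : y / x = c := by
      rw [← hcx]; field_simp
    rw [hyx]; exact hc
end

section
/- Let q be a prime power, let F be a field containing F_q, let t ≥ 0 be an integer, and let f(X) = ∑_{i=0}^{d} a_i X^{q^i} ∈ F[X] be a q-polynomial. Then in the polynomial ring F[X,Y], the polynomial X^q·Y − X·Y^q divides f(X)·Y^{q^t} − f(Y)·X^{q^t}. -/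
open MvPolynomial

lemma aux_key {F : Type} [Field F] (q : ℕ) (hq : 2 ≤ q) (a b : ℕ) (hab : a ≤ b) :
    ((X 0 : MvPolynomial (Fin 2) F) ^ q * X 1 - X 0 * (X 1) ^ q) ∣
      ((X 0 : MvPolynomial (Fin 2) F) ^ q ^ a * (X 1) ^ q ^ b -
        (X 1) ^ q ^ a * (X 0) ^ q ^ b) := by
  set x : MvPolynomial (Fin 2) F := X 0
  set y : MvPolynomial (Fin 2) F := X 1
  have hm : (q - 1) ∣ (q ^ (b - a) - 1) := by
    simpa using Nat.sub_dvd_pow_sub_pow q 1 (b - a)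
  obtain ⟨k, hk⟩ := hm
  have hqa : 1 ≤ q ^ a := Nat.one_le_pow _ _ (by omega)
  have hqb : q ^ a ≤ q ^ b := Nat.pow_le_pow_right (by omega) hab
  have hqba : 1 ≤ q ^ (b - a) := Nat.one_le_pow _ _ (by omega)
  have hsplit : q ^ b = q ^ a + q ^ a * ((q - 1) * k) := by
    have : q ^ b = q ^ a * q ^ (b - a) := by
      rw [← pow_add]; congr 1; omega
    rw [this]
    have : q ^ (b - a) = 1 + (q - 1) * k := by omega
    rw [this]; ring
  have h1 : ∀ z : MvPolynomial (Fin 2) F, z ^ q = z * z ^ (q - 1) := fun z => by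
    conv_lhs => rw [show q = 1 + (q - 1) by omega]
    rw [pow_add, pow_one]
  have hD : x ^ q * y - x * y ^ q = (x * y) * (x ^ (q - 1) - y ^ (q - 1)) := by
    rw [h1 x, h1 y]; ring
  have hE : x ^ q ^ a * y ^ q ^ b - y ^ q ^ a * x ^ q ^ b
      = (x * y) ^ q ^ a * (y ^ (q ^ a * ((q - 1) * k)) - x ^ (q ^ a * ((q - 1) * k))) := by
    rw [hsplit, pow_add, pow_add]; ring
  rw [hD, hE]
  apply mul_dvd_mul
  · exact dvd_pow_self _ (by omega)
  · rw [← dvd_neg, neg_sub]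
    have : x ^ (q ^ a * ((q - 1) * k)) - y ^ (q ^ a * ((q - 1) * k))
        = (x ^ (q - 1)) ^ (q ^ a * k) - (y ^ (q - 1)) ^ (q ^ a * k) := by
      rw [← pow_mul, ← pow_mul]; ring_nf
    rw [this]
    exact sub_dvd_pow_sub_pow _ _ _

lemma aux_key' {F : Type} [Field F] (q : ℕ) (hq : 2 ≤ q) (a b : ℕ) :
    ((X 0 : MvPolynomial (Fin 2) F) ^ q * X 1 - X 0 * (X 1) ^ q) ∣
      ((X 0 : MvPolynomial (Fin 2) F) ^ q ^ a * (X 1) ^ q ^ b -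
        (X 1) ^ q ^ a * (X 0) ^ q ^ b) := by
  rcases le_total a b with h | h
  · exact aux_key q hq a b h
  · rw [← dvd_neg, neg_sub]
    have := aux_key (F := F) q hq b a h
    convert this using 1
    ring

/-- Let `q = p^e` be a prime power and let `F` be a field containing
`F_q = GaloisField p e`.  For any `q`-polynomial `f(X) = ∑ a_i X^{q^i}` over `F` and
any `t ≥ 0`, the polynomial `X^q·Y − X·Y^q` divides `f(X)·Y^{q^t} − f(Y)·X^{q^t}`
in `F[X,Y]`. -/
theorem stmt_2 (p e : ℕ) [Fact p.Prime] (he : 0 < e) (q : ℕ) (hq : q = p ^ e)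
    (F : Type) [Field F] [Algebra (GaloisField p e) F]
    (t d : ℕ) (a : Fin (d + 1) → F) :
    ((MvPolynomial.X 0 : MvPolynomial (Fin 2) F) ^ q * MvPolynomial.X 1 -
        MvPolynomial.X 0 * (MvPolynomial.X 1) ^ q) ∣
      ((∑ i, MvPolynomial.C (a i) * (MvPolynomial.X 0 : MvPolynomial (Fin 2) F) ^ q ^ (i : ℕ)) *
          (MvPolynomial.X 1) ^ q ^ t -
        (∑ i, MvPolynomial.C (a i) * (MvPolynomial.X 1 : MvPolynomial (Fin 2) F) ^ q ^ (i : ℕ)) *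
          (MvPolynomial.X 0) ^ q ^ t) := by
  have hq2 : 2 ≤ q := by
    rw [hq]
    calc 2 ≤ p := (Fact.out : p.Prime).two_le
    _ ≤ p ^ e := Nat.le_self_pow (by omega) p
  have : (∑ i, MvPolynomial.C (a i) * (MvPolynomial.X 0 : MvPolynomial (Fin 2) F) ^ q ^ (i : ℕ)) *
          (MvPolynomial.X 1) ^ q ^ t -
        (∑ i, MvPolynomial.C (a i) * (MvPolynomial.X 1 : MvPolynomial (Fin 2) F) ^ q ^ (i : ℕ)) *
          (MvPolynomial.X 0) ^ q ^ t
      = ∑ i, MvPolynomial.C (a i) *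
          ((MvPolynomial.X 0 : MvPolynomial (Fin 2) F) ^ q ^ (i : ℕ) * (X 1) ^ q ^ t -
            (X 1) ^ q ^ (i : ℕ) * (X 0) ^ q ^ t) := by
    rw [Finset.sum_mul, Finset.sum_mul, ← Finset.sum_sub_distrib]
    congr 1; ext i; ring
  rw [this]
  exact Finset.dvd_sum fun i _ => Dvd.dvd.mul_left (aux_key' q hq2 (i : ℕ) t) _
end

section
/- Let q be a prime power, n ≥ 1, t ≥ 0, let f(X) = ∑_i a_i X^{q^i} ∈ F_{q^n}[X] be a q-polynomial, and let C(X,Y) ∈ F_{q^n}[X,Y] be the quotient polynomial (f(X)·Y^{q^t} − f(Y)·X^{q^t})/(X^q·Y − X·Y^q). Set U = {(x^{q^t}, f(x)) : x ∈ F_{q^n}} ⊆ F_{q^n}². Then every one-dimensional F_{q^n}-subspace of F_{q^n}² meets U in an F_q-subspace of dimension at most 1 (i.e., U defines a maximum scattered linear set in PG(1,q^n)) if and only if there is no point (x,y) ∈ F_{q^n}² with x ≠ 0, y/x ∉ F_q and C(x,y) = 0. -/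
/-!
Write `m = q ^ t`. For `x ≠ 0`, the points `(x ^ m, f x)` and `(y ^ m, f y)` of `U` are
`F`-proportional iff `f x * y ^ m = f y * x ^ m`, and the factor is then `(y / x) ^ m`. Since
`z ↦ z ^ m` is injective on `F`, this factor lies in `F_q` iff `y / x` does. Finally
`x ^ q * y - x * y ^ q = x ^ (q + 1) * (y / x - (y / x) ^ q)`, so away from `y / x ∈ F_q` the
zeros of `C` are exactly the proportional pairs.
-/

open Module Function

theorem FiniteField.pow_injective_of_dvd_card_pow {K : Type*} [Field K] [Fintype K] {m k : ℕ}
    (h : m ∣ Fintype.card K ^ k) : Injective fun z : K => z ^ m := by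
  obtain ⟨r, hr⟩ := h
  intro z w hzw
  calc z = (z ^ m) ^ r := by rw [← pow_mul, ← hr, FiniteField.pow_card_pow]
    _ = (w ^ m) ^ r := by rw [show z ^ m = w ^ m from hzw]
    _ = w := by rw [← pow_mul, ← hr, FiniteField.pow_card_pow]

theorem forall_finrank_eq_one_iff_forall_mem_span_singleton {K V : Type*} [Field K]
    [AddCommGroup V] [Module K V] (S : Set V) (Q : V → V → Prop) :
    (∀ W : Submodule K V, finrank K W = 1 →
      ∀ u ∈ W, u ∈ S → u ≠ 0 → ∀ w ∈ W, w ∈ S → Q u w) ↔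
    ∀ u ∈ S, ∀ w ∈ S, u ≠ 0 → w ∈ K ∙ u → Q u w := by
  constructor
  · intro h u huS w hwS hu hwu
    exact h _ (finrank_span_singleton hu) u (Submodule.mem_span_singleton_self u) huS hu w hwu hwS
  · intro h W hW u huW huS hu w hwW hwS
    obtain ⟨c, hc⟩ := (finrank_eq_one_iff_of_nonzero' (⟨u, huW⟩ : W) (by simpa using hu)).mp hW
      ⟨w, hwW⟩
    exact h u huS w hwS hu (Submodule.mem_span_singleton.mpr ⟨c, congrArg Subtype.val hc⟩)

theorem pow_pow_eq_self_iff {M : Type*} [Monoid M] {m : ℕ} (hm : Injective fun z : M => z ^ m)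
    (q : ℕ) (z : M) :
    (z ^ m) ^ q = z ^ m ↔ z ^ q = z := by
  rw [pow_right_comm]
  exact hm.eq_iff

section Field

variable {K : Type*} [Field K]

theorem pow_mul_sub_mul_pow_eq_zero_iff (q : ℕ) {x : K} (hx : x ≠ 0) (y : K) :
    x ^ q * y - x * y ^ q = 0 ↔ (y / x) ^ q = y / x := by
  have : x ^ q * y - x * y ^ q = x ^ (q + 1) * (y / x - (y / x) ^ q) := by
    rw [div_pow]
    field_simp
    ring
  rw [this, mul_eq_zero, sub_eq_zero, eq_comm (a := y / x)]
  simp [hx]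

theorem eq_div_pow_of_mul_pow_eq {m : ℕ} {a x y : K} (hx : x ≠ 0) (h : a * x ^ m = y ^ m) :
    a = (y / x) ^ m := by
  rw [div_pow, eq_div_iff (pow_ne_zero _ hx), h]

theorem graph_pair_scattered_iff {m : ℕ} (hm : Injective fun z : K => z ^ m) (q : ℕ) (f : K → K)
    (x y : K) :
    ((x ^ m, f x) ≠ 0 → (y ^ m, f y) ∈ K ∙ (x ^ m, f x) →
      ∃ c : K, c ^ q = c ∧ (y ^ m, f y) = c • (x ^ m, f x)) ↔
    (x ≠ 0 → f x * y ^ m = f y * x ^ m → (y / x) ^ q = y / x) := by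
  constructor
  · intro h hx hdet
    have hxm : x ^ m ≠ 0 := pow_ne_zero _ hx
    have hw : (y ^ m, f y) = (y / x) ^ m • (x ^ m, f x) := by
      ext
      · simp [div_pow, hxm]
      · simp only [Prod.smul_mk, smul_eq_mul, div_pow]
        rw [div_mul_eq_mul_div, eq_div_iff hxm]
        linear_combination -hdet
    obtain ⟨c, hc, hcw⟩ := h (by simp [hxm]) (Submodule.mem_span_singleton.mpr ⟨_, hw.symm⟩)
    have hc' : c = (y / x) ^ m := eq_div_pow_of_mul_pow_eq hx (congrArg Prod.fst hcw).symm
    rwa [hc', pow_pow_eq_self_iff hm] at hc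
  · intro h hu hw
    obtain ⟨a, ha⟩ := Submodule.mem_span_singleton.mp hw
    simp only [Prod.smul_mk, smul_eq_mul, Prod.ext_iff] at ha
    refine ⟨a, ?_, Prod.ext ha.1.symm ha.2.symm⟩
    by_cases hx : x = 0
    · have hm0 : m ≠ 0 := by
        rintro rfl
        exact zero_ne_one (hm (by simp))
      subst hx
      have hy : y = 0 := hm (by simpa [zero_pow hm0] using ha.1.symm)
      subst hy
      have hf0 : f 0 ≠ 0 := by simpa [zero_pow hm0] using hu
      obtain rfl : a = 1 := (mul_eq_right₀ hf0).mp ha.2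
      exact one_pow q
    · rw [eq_div_pow_of_mul_pow_eq hx ha.1, pow_pow_eq_self_iff hm]
      refine h hx ?_
      rw [← ha.1, ← ha.2]
      ring

theorem graph_scattered_iff {m : ℕ} (hm : Injective fun z : K => z ^ m) (q : ℕ) (f : K → K) :
    (∀ W : Submodule K (K × K), finrank K W = 1 →
      ∀ u ∈ W, u ∈ Set.range (fun x : K => (x ^ m, f x)) → u ≠ 0 →
        ∀ w ∈ W, w ∈ Set.range (fun x : K => (x ^ m, f x)) → ∃ c : K, c ^ q = c ∧ w = c • u) ↔
    ∀ x y : K, x ≠ 0 → f x * y ^ m = f y * x ^ m → (y / x) ^ q = y / x := by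
  rw [forall_finrank_eq_one_iff_forall_mem_span_singleton]
  simp only [Set.forall_mem_range]
  exact forall₂_congr fun x y => graph_pair_scattered_iff hm q f x y

end Field

theorem stmt_3_general (q : ℕ)
    (n : ℕ) (F : Type) [Field F] [Fintype F]
    (hcard : Fintype.card F = q ^ n)
    (t d : ℕ) (a : Fin (d + 1) → F)
    (C : MvPolynomial (Fin 2) F)
    (hC : C * ((MvPolynomial.X 0 : MvPolynomial (Fin 2) F) ^ q * MvPolynomial.X 1 -
            MvPolynomial.X 0 * (MvPolynomial.X 1) ^ q) =
          (∑ i, MvPolynomial.C (a i) * (MvPolynomial.X 0 : MvPolynomial (Fin 2) F) ^ q ^ (i : ℕ)) *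
              (MvPolynomial.X 1) ^ q ^ t -
            (∑ i, MvPolynomial.C (a i) * (MvPolynomial.X 1 : MvPolynomial (Fin 2) F) ^ q ^ (i : ℕ)) *
              (MvPolynomial.X 0) ^ q ^ t) :
    (∀ W : Submodule F (F × F), Module.finrank F W = 1 →
      ∀ u ∈ W, u ∈ Set.range (fun x : F => (x ^ q ^ t, ∑ i, a i * x ^ q ^ (i : ℕ))) → u ≠ 0 →
        ∀ w ∈ W, w ∈ Set.range (fun x : F => (x ^ q ^ t, ∑ i, a i * x ^ q ^ (i : ℕ))) →
          ∃ c : F, c ^ q = c ∧ w = c • u) ↔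
    ¬ ∃ x y : F, x ≠ 0 ∧ ¬ ((y / x) ^ q = y / x) ∧ MvPolynomial.eval ![x, y] C = 0 := by
  have hn : n ≠ 0 := by
    rintro rfl
    exact (Fintype.one_lt_card (α := F)).ne' (by simpa using hcard)
  have hm : Injective fun z : F => z ^ q ^ t :=
    FiniteField.pow_injective_of_dvd_card_pow (pow_dvd_pow_of_dvd (hcard ▸ dvd_pow_self q hn) t)
  rw [graph_scattered_iff hm]
  simp only [not_exists, not_and]
  refine forall₂_congr fun x y => forall_congr' fun hx => ?_
  have heval := congrArg (MvPolynomial.eval ![x, y]) hC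
  simp only [Fin.isValue, map_mul, map_sub, map_pow, map_sum, MvPolynomial.eval_X,
    MvPolynomial.eval_C, Matrix.cons_val_zero, Matrix.cons_val_one] at heval
  rw [← sub_eq_zero, ← heval, mul_eq_zero, pow_mul_sub_mul_pow_eq_zero_iff q hx]
  tauto

/-- Let `q = p^e` be a prime power, `F = F_{q^n}`, `f(X) = ∑ a_i X^{q^i}` a
`q`-polynomial over `F`, and `C(X,Y) = (f(X)·Y^{q^t} − f(Y)·X^{q^t})/(X^q·Y − X·Y^q)`.
Then `U = {(x^{q^t}, f(x))}` meets every one-dimensional `F`-subspace of `F²` in an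
`F_q`-subspace of dimension at most `1` iff there is no point `(x,y) ∈ F²` with `x ≠ 0`,
`y/x ∉ F_q` and `C(x,y) = 0`.  Here `F_q` is identified with `{c : c^q = c}`. -/
theorem stmt_3 (p e : ℕ) [Fact p.Prime] (he : 0 < e) (q : ℕ) (hq : q = p ^ e)
    (n : ℕ) (hn : 1 ≤ n) (F : Type) [Field F] [Fintype F]
    (hcard : Fintype.card F = q ^ n)
    (t d : ℕ) (a : Fin (d + 1) → F)
    (C : MvPolynomial (Fin 2) F)
    (hC : C * ((MvPolynomial.X 0 : MvPolynomial (Fin 2) F) ^ q * MvPolynomial.X 1 -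
            MvPolynomial.X 0 * (MvPolynomial.X 1) ^ q) =
          (∑ i, MvPolynomial.C (a i) * (MvPolynomial.X 0 : MvPolynomial (Fin 2) F) ^ q ^ (i : ℕ)) *
              (MvPolynomial.X 1) ^ q ^ t -
            (∑ i, MvPolynomial.C (a i) * (MvPolynomial.X 1 : MvPolynomial (Fin 2) F) ^ q ^ (i : ℕ)) *
              (MvPolynomial.X 0) ^ q ^ t) :
    (∀ W : Submodule F (F × F), Module.finrank F W = 1 →
      ∀ u ∈ W, u ∈ Set.range (fun x : F => (x ^ q ^ t, ∑ i, a i * x ^ q ^ (i : ℕ))) → u ≠ 0 →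
        ∀ w ∈ W, w ∈ Set.range (fun x : F => (x ^ q ^ t, ∑ i, a i * x ^ q ^ (i : ℕ))) →
          ∃ c : F, c ^ q = c ∧ w = c • u) ↔
    ¬ ∃ x y : F, x ≠ 0 ∧ ¬ ((y / x) ^ q = y / x) ∧ MvPolynomial.eval ![x, y] C = 0 :=
  stmt_3_general q n F hcard t d a C hC
end

section
/- Let n ≥ 1, let k ≥ 3 be an integer, let a, b ∈ F_{2^n} be nonzero, and let K be an algebraic closure of F_{2^n}. Then the polynomial b·(Y^{2^k−1}+1)·U³ + a·(Y^{2^{k−1}−1}+1)·U + (Y^{2^{k−2}−1}+1), regarded as a cubic polynomial in the variable U with coefficients in the rational function field K(Y), has no root in K(Y); in particular, it is irreducible as a polynomial in U over K(Y). -/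
/-!
Write a putative root as `u = h / g` with `h, g ∈ K[Y]` coprime and `g` monic. Clearing
denominators gives `b (Y^{2^k-1}+1) h³ + a (Y^{2^{k-1}-1}+1) h g² + (Y^{2^{k-2}-1}+1) g³ = 0`,
so `g²` divides `Y^{2^k-1}+1`. In characteristic 2 this polynomial is separable (its exponent is
odd), hence squarefree, so `g = 1` and `u = h` is a polynomial. But then the term
`b (Y^{2^k-1}+1) h³` has degree strictly larger than the other two, a contradiction. A cubic
without roots is irreducible.
-/

open Polynomial

theorem FiniteField.charP_two_of_card_eq_two_pow {F : Type*} [Field F] [Fintype F] {n : ℕ}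
    (hcard : Fintype.card F = 2 ^ n) : CharP F 2 :=
  CharTwo.of_one_ne_zero_of_two_eq_zero one_ne_zero <|
    eq_zero_of_pow_eq_zero (n := n) (by simpa [hcard] using FiniteField.cast_card_eq_zero F)

theorem CharTwo.natCast_two_pow_sub_one_ne_zero {R : Type*} [Ring R] [Nontrivial R] [CharP R 2]
    {j : ℕ} (hj : j ≠ 0) : ((2 ^ j - 1 : ℕ) : R) ≠ 0 := by
  simp [Nat.cast_sub Nat.one_le_two_pow, hj]

theorem Polynomial.squarefree_X_pow_add_one {K : Type*} [Field K] {m : ℕ} (hm : (m : K) ≠ 0) :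
    Squarefree (X ^ m + 1 : K[X]) := by
  rw [← sub_neg_eq_add, ← C_1, ← C_neg]
  exact (separable_X_pow_sub_C _ hm (neg_ne_zero.mpr one_ne_zero)).squarefree

theorem Polynomial.natDegree_X_pow_add_one {R : Type*} [Semiring R] [Nontrivial R] (m : ℕ) :
    (X ^ m + 1 : R[X]).natDegree = m := by
  simpa using natDegree_X_pow_add_C (n := m) (r := (1 : R))

theorem Polynomial.natDegree_depressed_cubic {R : Type*} [Semiring R] {c : R} (hc : c ≠ 0)
    (d e : R) : (C c * X ^ 3 + C d * X + C e).natDegree = 3 := by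
  simpa using natDegree_cubic (b := 0) (c := d) (d := e) hc

theorem isUnit_of_depressed_cubic_eq_zero {R : Type*} [CommRing R] {p q r h g : R}
    (hp : Squarefree p) (hhg : IsCoprime h g)
    (H : p * h ^ 3 + q * h * g ^ 2 + r * g ^ 3 = 0) : IsUnit g := by
  have hdvd : g ^ 2 ∣ p * h ^ 3 := ⟨-(q * h + r * g), by linear_combination H⟩
  exact hp g (sq g ▸ hhg.symm.pow.dvd_of_dvd_mul_right hdvd)

theorem Polynomial.depressed_cubic_ne_zero {R : Type*} [CommRing R] [IsDomain R]
    {p q r : R[X]} (hp : p ≠ 0) (hr : r ≠ 0) (hq : q.natDegree < p.natDegree)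
    (hrp : r.natDegree < p.natDegree) (h : R[X]) : p * h ^ 3 + q * h + r ≠ 0 := by
  intro H
  rcases eq_or_ne h 0 with rfl | hh
  · exact hr (by simpa using H)
  have hlead : (p * h ^ 3).natDegree = p.natDegree + 3 * h.natDegree := by
    rw [natDegree_mul hp (pow_ne_zero _ hh), natDegree_pow]
  have hrest : (q * h + r).natDegree ≤ max (q.natDegree + h.natDegree) r.natDegree :=
    (natDegree_add_le _ _).trans (max_le_max natDegree_mul_le le_rfl)
  have hneg : p * h ^ 3 = -(q * h + r) := by linear_combination H
  rw [hneg, natDegree_neg] at hlead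
  omega

namespace RatFunc

variable {K : Type*} [Field K]

theorem num_denom_depressed_cubic {p q r : K[X]} {u : RatFunc K}
    (hu : algebraMap _ _ p * u ^ 3 + algebraMap _ _ q * u + algebraMap _ _ r = 0) :
    p * u.num ^ 3 + q * u.num * u.denom ^ 2 + r * u.denom ^ 3 = 0 := by
  apply IsFractionRing.injective K[X] (RatFunc K)
  have hg : algebraMap K[X] (RatFunc K) u.denom ≠ 0 := algebraMap_ne_zero u.denom_ne_zero
  have hnum : algebraMap _ _ u.num = u * algebraMap K[X] (RatFunc K) u.denom :=
    ((eq_div_iff hg).mp (num_div_denom u).symm).symm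
  simp only [map_add, map_mul, map_pow, map_zero, hnum]
  linear_combination algebraMap K[X] (RatFunc K) u.denom ^ 3 * hu

theorem depressed_cubic_ne_zero {p q r : K[X]} (hp : Squarefree p) (hr : r ≠ 0)
    (hq : q.natDegree < p.natDegree) (hrp : r.natDegree < p.natDegree) (u : RatFunc K) :
    algebraMap _ _ p * u ^ 3 + algebraMap _ _ q * u + algebraMap _ _ r ≠ 0 := by
  intro hu
  have H := num_denom_depressed_cubic hu
  have hg : u.denom = 1 := u.monic_denom.eq_one_of_isUnit
    (isUnit_of_depressed_cubic_eq_zero hp u.isCoprime_num_denom H)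
  rw [hg, one_pow, one_pow, mul_one, mul_one] at H
  exact Polynomial.depressed_cubic_ne_zero hp.ne_zero hr hq hrp u.num H

theorem X_pow_add_one_ne_zero {m : ℕ} (hm : m ≠ 0) : (X ^ m + 1 : RatFunc K) ≠ 0 := by
  simpa using algebraMap_ne_zero (K := K) (X_pow_add_C_ne_zero (Nat.pos_of_ne_zero hm) 1)

end RatFunc

theorem two_pow_cubic_ne_zero {K : Type*} [Field K] [CharP K 2] {k : ℕ} (hk : 3 ≤ k)
    (a : K) {b : K} (hb : b ≠ 0) (u : RatFunc K) :
    RatFunc.C b * (RatFunc.X ^ (2 ^ k - 1) + 1) * u ^ 3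
      + RatFunc.C a * (RatFunc.X ^ (2 ^ (k - 1) - 1) + 1) * u
      + (RatFunc.X ^ (2 ^ (k - 2) - 1) + 1) ≠ 0 := by
  have h₂₁ : 2 ^ (k - 2) < 2 ^ (k - 1) := Nat.pow_lt_pow_right (by norm_num) (by omega)
  have h₁₀ : 2 ^ (k - 1) < 2 ^ k := Nat.pow_lt_pow_right (by norm_num) (by omega)
  have h₂ : 2 ≤ 2 ^ (k - 2) := Nat.le_self_pow (by omega) 2
  have hsq : Squarefree (C b * (X ^ (2 ^ k - 1) + 1)) :=
    (associated_unit_mul_left _ _ (isUnit_C.mpr hb.isUnit)).squarefree_iff.mpr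
      (squarefree_X_pow_add_one (CharTwo.natCast_two_pow_sub_one_ne_zero (by omega)))
  have hr : (X ^ (2 ^ (k - 2) - 1) + 1 : K[X]) ≠ 0 :=
    ne_zero_of_natDegree_gt (n := 0) (by rw [natDegree_X_pow_add_one]; omega)
  have hp : (C b * (X ^ (2 ^ k - 1) + 1) : K[X]).natDegree = 2 ^ k - 1 := by
    rw [natDegree_C_mul hb, natDegree_X_pow_add_one]
  have hq : (C a * (X ^ (2 ^ (k - 1) - 1) + 1)).natDegree
      < (C b * (X ^ (2 ^ k - 1) + 1)).natDegree :=
    (natDegree_C_mul_le _ _).trans_lt (by rw [hp, natDegree_X_pow_add_one]; omega)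
  have hrp : (X ^ (2 ^ (k - 2) - 1) + 1 : K[X]).natDegree
      < (C b * (X ^ (2 ^ k - 1) + 1)).natDegree := by
    rw [hp, natDegree_X_pow_add_one]; omega
  simpa only [map_add, map_mul, map_pow, map_one, RatFunc.algebraMap_C, RatFunc.algebraMap_X]
    using
    RatFunc.depressed_cubic_ne_zero hsq hr hq hrp u

theorem stmt_12_general (n : ℕ) (F : Type) [Field F] [Fintype F]
    (hcard : Fintype.card F = 2 ^ n) (k : ℕ) (hk : 3 ≤ k)
    (a b : F) (hb : b ≠ 0)
    (P : Polynomial (RatFunc (AlgebraicClosure F)))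
    (hP : P = Polynomial.C (RatFunc.C (algebraMap F (AlgebraicClosure F) b) *
            ((RatFunc.X : RatFunc (AlgebraicClosure F)) ^ (2 ^ k - 1) + 1)) *
            Polynomial.X ^ 3
        + Polynomial.C (RatFunc.C (algebraMap F (AlgebraicClosure F) a) *
            ((RatFunc.X : RatFunc (AlgebraicClosure F)) ^ (2 ^ (k - 1) - 1) + 1)) *
            Polynomial.X
        + Polynomial.C ((RatFunc.X : RatFunc (AlgebraicClosure F)) ^ (2 ^ (k - 2) - 1) + 1)) :
    (∀ u : RatFunc (AlgebraicClosure F), Polynomial.eval u P ≠ 0) ∧ Irreducible P := by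
  have := FiniteField.charP_two_of_card_eq_two_pow hcard
  have hb' : algebraMap F (AlgebraicClosure F) b ≠ 0 := (_root_.map_ne_zero _).mpr hb
  have hroot : ∀ u, P.eval u ≠ 0 := fun u => by
    simpa only [hP, eval_add, eval_mul, eval_pow, eval_C, eval_X] using
      two_pow_cubic_ne_zero hk (algebraMap F _ a) hb' u
  have hlead : RatFunc.C (algebraMap F (AlgebraicClosure F) b) *
      ((RatFunc.X : RatFunc (AlgebraicClosure F)) ^ (2 ^ k - 1) + 1) ≠ 0 :=
    mul_ne_zero ((_root_.map_ne_zero _).mpr hb')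
      (RatFunc.X_pow_add_one_ne_zero (Nat.sub_ne_zero_of_lt (Nat.one_lt_two_pow (by omega))))
  refine ⟨hroot, irreducible_of_degree_le_three_of_not_isRoot ?_ hroot⟩
  rw [hP, natDegree_depressed_cubic hlead]
  decide

/-- Let `F = F_{2^n}`, `K` its algebraic closure, `k ≥ 3`, and `a, b ∈ F`
nonzero.  Then the cubic polynomial
`b·(Y^{2^k−1}+1)·U³ + a·(Y^{2^{k−1}−1}+1)·U + (Y^{2^{k−2}−1}+1)` in the variable `U`
over the rational function field `K(Y)` has no root in `K(Y)`; in particular it is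
irreducible over `K(Y)`. -/
theorem stmt_12 (n : ℕ) (hn : 1 ≤ n) (F : Type) [Field F] [Fintype F]
    (hcard : Fintype.card F = 2 ^ n) (k : ℕ) (hk : 3 ≤ k)
    (a b : F) (ha : a ≠ 0) (hb : b ≠ 0)
    (P : Polynomial (RatFunc (AlgebraicClosure F)))
    (hP : P = Polynomial.C (RatFunc.C (algebraMap F (AlgebraicClosure F) b) *
            ((RatFunc.X : RatFunc (AlgebraicClosure F)) ^ (2 ^ k - 1) + 1)) *
            Polynomial.X ^ 3
        + Polynomial.C (RatFunc.C (algebraMap F (AlgebraicClosure F) a) *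
            ((RatFunc.X : RatFunc (AlgebraicClosure F)) ^ (2 ^ (k - 1) - 1) + 1)) *
            Polynomial.X
        + Polynomial.C ((RatFunc.X : RatFunc (AlgebraicClosure F)) ^ (2 ^ (k - 2) - 1) + 1)) :
    (∀ u : RatFunc (AlgebraicClosure F), Polynomial.eval u P ≠ 0) ∧ Irreducible P :=
  stmt_12_general n F hcard k hk a b hb P hP
end
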